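/- arXiv:1611.05001 — 2 statements merged into one kernel-verified Lean document; each statement's English description precedes it below -/
import Mathlib

section
/- Existence of sparse minimal formulas: if a numerical differentiation formula of polynomial exactness order q exists on X = {x₁,…,x_N}, then for any μ ≥ 0 there exists a ‖·‖_{1,μ}-minimal formula of order q whose weight vector has at most dim Π_q^d = binom(d+q-1, d) nonzero components. -/
open scoped BigOperators

/-- Partial derivative in the `i`-th coordinate direction. -/
noncomputable def pd {d : ℕ} (i : Fin d) (f : EuclideanSpace ℝ (Fin d) → ℝ) :
    EuclideanSpace ℝ (Fin d) → ℝ :=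
  fun x => lineDeriv ℝ f x (EuclideanSpace.single i 1)

/-- Multi-index partial derivative ∂^α f. -/
noncomputable def pdMulti {d : ℕ} (α : Fin d → ℕ) (f : EuclideanSpace ℝ (Fin d) → ℝ) :
    EuclideanSpace ℝ (Fin d) → ℝ :=
  (List.ofFn (fun i : Fin d => (pd i)^[α i])).foldr (· ∘ ·) id f

/-- The linear differential operator D = ∑_{|α|≤k} c_α ∂^α applied to f at y. -/
noncomputable def Dapply {d : ℕ} (k : ℕ)
    (c : (Fin d → ℕ) → EuclideanSpace ℝ (Fin d) → ℝ)
    (f : EuclideanSpace ℝ (Fin d) → ℝ) (y : EuclideanSpace ℝ (Fin d)) : ℝ :=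
  ∑ s ∈ Finset.range (k + 1), ∑ α ∈ Finset.Nat.antidiagonalTuple d s,
    c α y * pdMulti α f y

/-- Evaluation of a d-variate polynomial at a point of ℝ^d. -/
noncomputable def evalP {d : ℕ} (P : MvPolynomial (Fin d) ℝ)
    (y : EuclideanSpace ℝ (Fin d)) : ℝ :=
  MvPolynomial.eval (fun i => y i) P

/-!
The exactness conditions are linear in the weights: they prescribe the value of the moment
functional `P ↦ ∑ⱼ wⱼ P(xⱼ)` on `Π_q^d`. The exact formulas therefore form an affine subspace,
and since `‖·‖_{1,μ}` is the pull-back of the `ℓ¹` norm under `w ↦ (‖xⱼ - z‖^μ wⱼ)ⱼ`, it attains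
its minimum there. Take a minimizer `w` of smallest support. If the point evaluations at the
`xⱼ` with `wⱼ ≠ 0` were linearly dependent on `Π_q^d`, moving `w` along a dependence keeps it
exact and keeps the cost minimal up to the point where a first weight vanishes, contradicting the
choice of `w`. Hence the support has at most `dim Π_q^d ≤ binom(d+q-1, d)` elements.
-/

open Finset

section WeightedL1

variable {κ M : Type*} [Fintype κ] [AddCommGroup M] [Module ℝ M]

def weightedL1 (r w : κ → ℝ) : ℝ := ∑ j, |w j| * r j

theorem exists_isMinOn_weightedL1 {r : κ → ℝ} (hr : 0 ≤ r) (T : (κ → ℝ) →ₗ[ℝ] M)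
    (w₀ : κ → ℝ) : ∃ w, T w = T w₀ ∧ IsMinOn (weightedL1 r) {v | T v = T w₀} w := by
  -- `weightedL1 r` is the pull-back of the `ℓ¹` norm along `w ↦ r * w`
  let L : (κ → ℝ) →ₗ[ℝ] PiLp 1 (fun _ : κ => ℝ) :=
    (WithLp.linearEquiv 1 ℝ (κ → ℝ)).symm.toLinearMap ∘ₗ LinearMap.mulLeft ℝ r
  have norm_L : ∀ w, ‖L w‖ = weightedL1 r w := fun w => by
    simp [L, PiLp.norm_eq_of_L1, weightedL1, abs_of_nonneg (hr _), mul_comm]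
  have feasible : {v | T v = T w₀} = AffineSubspace.mk' w₀ (LinearMap.ker T) := by
    ext v; simp [AffineSubspace.mem_mk', sub_eq_zero]
  have closed : IsClosed (L '' {v | T v = T w₀}) := by
    rw [feasible]
    exact ((AffineSubspace.mk' w₀ (LinearMap.ker T)).map L.toAffineMap).closed_of_finiteDimensional
  obtain ⟨_, ⟨w, hw, rfl⟩, hdist⟩ :=
    closed.exists_infDist_eq_dist ⟨L w₀, w₀, rfl, rfl⟩ 0
  refine ⟨w, hw, fun v hv => ?_⟩
  change weightedL1 r w ≤ weightedL1 r v
  rw [← norm_L, ← norm_L, ← dist_zero_left, ← dist_zero_left, ← hdist]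
  exact Metric.infDist_le_dist_of_mem ⟨v, hv, rfl⟩

theorem abs_add_eq_abs_add_sign_mul {a c : ℝ} (h : |c| ≤ |a|) :
    |a + c| = |a| + Real.sign a * c := by
  rcases lt_trichotomy a 0 with ha | rfl | ha
  · rw [abs_of_neg ha] at h ⊢
    rw [Real.sign_of_neg ha, abs_of_nonpos (by linarith [le_abs_self c])]
    ring
  · simp_all
  · rw [abs_of_pos ha] at h ⊢
    rw [Real.sign_of_pos ha, abs_of_nonneg (by linarith [neg_abs_le c])]
    ring

theorem weightedL1_add_smul {r w u : κ → ℝ} {t : ℝ} (h : ∀ j, |t * u j| ≤ |w j|) :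
    weightedL1 r (w + t • u) = weightedL1 r w + t * ∑ j, Real.sign (w j) * u j * r j := by
  simp only [weightedL1, Pi.add_apply, Pi.smul_apply, smul_eq_mul, mul_sum,
    ← sum_add_distrib, abs_add_eq_abs_add_sign_mul (h _)]
  exact sum_congr rfl fun j _ => by ring

theorem exists_first_zero_crossing {w u : κ → ℝ} (hu : u ≠ 0)
    (hsupp : ∀ j, u j ≠ 0 → w j ≠ 0) :
    ∃ t τ, (∀ j, |t * u j| ≤ |w j|) ∧ w τ ≠ 0 ∧ w τ + t * u τ = 0 := by
  classical
  obtain ⟨j₀, hj₀⟩ := Function.ne_iff.mp hu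
  obtain ⟨τ, hτ, hτmin⟩ := exists_min_image {j | u j ≠ 0} (fun j => |w j| / |u j|)
    ⟨j₀, by simpa using hj₀⟩
  replace hτ : u τ ≠ 0 := (mem_filter.mp hτ).2
  refine ⟨-(w τ / u τ), τ, fun j => ?_, hsupp τ hτ, by field_simp; ring⟩
  by_cases hj : u j = 0
  · simp [hj]
  calc |-(w τ / u τ) * u j| = |w τ| / |u τ| * |u j| := by rw [abs_mul, abs_neg, abs_div]
    _ ≤ |w j| / |u j| * |u j| :=
        mul_le_mul_of_nonneg_right (hτmin j (by simpa using hj)) (abs_nonneg _)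
    _ = |w j| := div_mul_cancel₀ _ (abs_ne_zero.mpr hj)

/-- `weightedL1 r` is affine along `u` up to the first zero crossing of `w + t • u`, and the
minimality of `w` forces its slope to vanish. -/
theorem IsMinOn.exists_card_support_lt {r w u : κ → ℝ} {T : (κ → ℝ) →ₗ[ℝ] M}
    (hw : IsMinOn (weightedL1 r) {v | T v = T w} w) (hu : T u = 0) (hu₀ : u ≠ 0)
    (hsupp : ∀ j, u j ≠ 0 → w j ≠ 0) :
    ∃ w', T w' = T w ∧ IsMinOn (weightedL1 r) {v | T v = T w} w' ∧
      #{j | w' j ≠ 0} < #{j | w j ≠ 0} := by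
  classical
  obtain ⟨t, τ, hsmall, hwτ, hτ⟩ := exists_first_zero_crossing hu₀ hsupp
  have hT : ∀ s : ℝ, T (w + s • u) = T w := fun s => by simp [hu]
  have hsmall' : ∀ j, |-t * u j| ≤ |w j| := fun j => by simpa [neg_mul, abs_neg] using hsmall j
  have h_pos : weightedL1 r w ≤ weightedL1 r (w + t • u) := hw (hT t)
  have h_neg : weightedL1 r w ≤ weightedL1 r (w + (-t) • u) := hw (hT (-t))
  rw [weightedL1_add_smul hsmall] at h_pos
  rw [weightedL1_add_smul hsmall'] at h_neg
  have hcost : weightedL1 r (w + t • u) = weightedL1 r w := by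
    rw [weightedL1_add_smul hsmall]; linarith
  refine ⟨w + t • u, hT t, fun v hv => ?_, card_lt_card ?_⟩
  · simpa [hcost] using hw hv
  refine (ssubset_iff_of_subset fun j => ?_).mpr ⟨τ, by simpa using hwτ, by simpa using hτ⟩
  simp only [mem_filter, mem_univ, true_and, Pi.add_apply, Pi.smul_apply,
    smul_eq_mul]
  intro hj hwj
  have : u j = 0 := by_contra fun h => hsupp j h hwj
  simp_all

theorem exists_isMinOn_weightedL1_card_support_le [FiniteDimensional ℝ M] {r : κ → ℝ}
    (hr : 0 ≤ r) (T : (κ → ℝ) →ₗ[ℝ] M) (w₀ : κ → ℝ) :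
    ∃ w, T w = T w₀ ∧ IsMinOn (weightedL1 r) {v | T v = T w₀} w ∧
      #{j | w j ≠ 0} ≤ Module.finrank ℝ M := by
  classical
  obtain ⟨w, ⟨hwT, hwmin⟩, hsparsest⟩ := (measure fun w : κ → ℝ => #{j | w j ≠ 0}).wf.has_min
    {w | T w = T w₀ ∧ IsMinOn (weightedL1 r) {v | T v = T w₀} w}
    (exists_isMinOn_weightedL1 hr T w₀)
  rw [← hwT] at hwmin
  let extend := Function.ExtendByZero.linearMap ℝ (Subtype.val : {j // w j ≠ 0} → κ)
  have hinj : Function.Injective (T ∘ₗ extend) := by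
    refine (injective_iff_map_eq_zero _).mpr fun g hg => ?_
    by_contra hg₀
    have hext : extend g ≠ 0 := fun h =>
      hg₀ <| Function.extend_injective Subtype.val_injective (0 : κ → ℝ) <|
        h.trans extend.map_zero.symm
    have hsupp : ∀ j, extend g j ≠ 0 → w j ≠ 0 := fun j hj hwj =>
      hj (Function.extend_apply' _ _ _ fun ⟨i, hi⟩ => i.2 (hi ▸ hwj))
    obtain ⟨w', hw'T, hw'min, hlt⟩ := hwmin.exists_card_support_lt hg hext hsupp
    exact hsparsest w' ⟨hw'T.trans hwT, hwT ▸ hw'min⟩ hlt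
  refine ⟨w, hwT, hwT ▸ hwmin, ?_⟩
  simpa [Fintype.card_subtype] using LinearMap.finrank_le_finrank_of_injective hinj

end WeightedL1

section Polynomial

open MvPolynomial

noncomputable def totalDegreeLT (d q : ℕ) : Submodule ℝ (MvPolynomial (Fin d) ℝ) :=
  Submodule.span ℝ {P | P.totalDegree < q}

/-- Exponents of total degree `≤ n` in `d` variables, obtained by dropping the last exponent of
the exponents of total degree exactly `n` in `d + 1` variables. -/
noncomputable def exponentsLE (d n : ℕ) : Finset (Fin d →₀ ℕ) :=
  (univ.finsuppAntidiag n).image fun m : Fin (d + 1) →₀ ℕ =>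
    Finsupp.equivFunOnFinite.symm (m ∘ Fin.castSucc)

theorem mem_exponentsLE {d n : ℕ} {m : Fin d →₀ ℕ} (hm : (m.sum fun _ e => e) ≤ n) :
    m ∈ exponentsLE d n := by
  rw [Finsupp.sum_fintype _ _ fun _ => rfl] at hm
  refine mem_image.mpr ⟨Finsupp.equivFunOnFinite.symm (Fin.snoc m (n - ∑ i, m i)), ?_, ?_⟩
  · simp [Fin.sum_univ_castSucc, hm]
  · ext i; simp

theorem card_exponentsLE_le (d n : ℕ) : #(exponentsLE d n) ≤ (d + n).choose d := by
  refine card_image_le.trans ?_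
  rw [card_finsuppAntidiag_nat_eq_choose, card_univ, Fintype.card_fin,
    show d + 1 + n - 1 = d + n by omega, Nat.choose_symm_add]

theorem totalDegreeLT_le_restrictSupport (d q : ℕ) :
    totalDegreeLT d q ≤ restrictSupport ℝ (exponentsLE d (q - 1) : Set (Fin d →₀ ℕ)) :=
  Submodule.span_le.mpr fun _ hP _ hm =>
    mem_exponentsLE <| Nat.le_sub_one_of_lt <| (le_totalDegree hm).trans_lt hP

instance {σ : Type*} (s : Finset (σ →₀ ℕ)) :
    FiniteDimensional ℝ (restrictSupport ℝ (s : Set (σ →₀ ℕ))) :=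
  Module.Finite.of_basis (basisRestrictSupport ℝ _)

instance (d q : ℕ) : FiniteDimensional ℝ (totalDegreeLT d q) :=
  Submodule.finiteDimensional_of_le (totalDegreeLT_le_restrictSupport d q)

theorem finrank_totalDegreeLT_le (d q : ℕ) :
    Module.finrank ℝ (totalDegreeLT d q) ≤ (d + q - 1).choose d := by
  rcases q with _ | q
  · have : {P : MvPolynomial (Fin d) ℝ | P.totalDegree < 0} = ∅ := by ext; simp
    rw [totalDegreeLT, this, Submodule.span_empty, finrank_bot]
    exact Nat.zero_le _
  calc Module.finrank ℝ (totalDegreeLT d (q + 1))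
      ≤ Module.finrank ℝ (restrictSupport ℝ (exponentsLE d q : Set (Fin d →₀ ℕ))) :=
        Submodule.finrank_mono (totalDegreeLT_le_restrictSupport d (q + 1))
    _ = #(exponentsLE d q) := by
        simp [Module.finrank_eq_card_basis (basisRestrictSupport ℝ _)]
    _ ≤ (d + (q + 1) - 1).choose d := card_exponentsLE_le d q

/-- `momentMap x q w` is the functional `P ↦ ∑ⱼ w j * P (x j)` on polynomials of degree `< q`. -/
noncomputable def momentMap {d N : ℕ} (x : Fin N → EuclideanSpace ℝ (Fin d)) (q : ℕ) :
    (Fin N → ℝ) →ₗ[ℝ] Module.Dual ℝ (totalDegreeLT d q) :=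
  (∑ j, (LinearMap.proj j).smulRight (aeval fun i => x j i).toLinearMap).compl₂
    (totalDegreeLT d q).subtype

theorem momentMap_apply {d N : ℕ} (x : Fin N → EuclideanSpace ℝ (Fin d)) (q : ℕ)
    (w : Fin N → ℝ) (P : totalDegreeLT d q) :
    momentMap x q w P = ∑ j, w j * evalP (P : MvPolynomial (Fin d) ℝ) (x j) := by
  simp [momentMap, evalP]

theorem momentMap_eq_momentMap_iff {d N : ℕ} {x : Fin N → EuclideanSpace ℝ (Fin d)} {q : ℕ}
    {w v : Fin N → ℝ} :
    momentMap x q w = momentMap x q v ↔ ∀ P : MvPolynomial (Fin d) ℝ, P.totalDegree < q →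
      ∑ j, w j * evalP P (x j) = ∑ j, v j * evalP P (x j) := by
  constructor
  · intro h P hP
    simpa [momentMap_apply] using LinearMap.congr_fun h ⟨P, Submodule.subset_span hP⟩
  · intro h
    refine LinearMap.ext_on Submodule.span_span_coe_preimage fun P hP => ?_
    simpa [momentMap_apply] using h P hP

end Polynomial

theorem sparse_minimal_formula_general (d k q N : ℕ)
    (c : (Fin d → ℕ) → EuclideanSpace ℝ (Fin d) → ℝ)
    (z : EuclideanSpace ℝ (Fin d)) (x : Fin N → EuclideanSpace ℝ (Fin d))
    (hex : ∃ w : Fin N → ℝ, ∀ P : MvPolynomial (Fin d) ℝ, P.totalDegree < q →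
      Dapply k c (evalP P) z = ∑ j, w j * evalP P (x j))
    (μ : ℝ) :
    ∃ w : Fin N → ℝ,
      (∀ P : MvPolynomial (Fin d) ℝ, P.totalDegree < q →
        Dapply k c (evalP P) z = ∑ j, w j * evalP P (x j)) ∧
      (∀ v : Fin N → ℝ,
        (∀ P : MvPolynomial (Fin d) ℝ, P.totalDegree < q →
          Dapply k c (evalP P) z = ∑ j, v j * evalP P (x j)) →
        ∑ j, |w j| * ‖x j - z‖ ^ μ ≤ ∑ j, |v j| * ‖x j - z‖ ^ μ) ∧
      (Finset.univ.filter (fun j => w j ≠ 0)).card ≤ (d + q - 1).choose d := by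
  obtain ⟨w₀, hw₀⟩ := hex
  have exact_iff : ∀ v : Fin N → ℝ, (∀ P : MvPolynomial (Fin d) ℝ, P.totalDegree < q →
      Dapply k c (evalP P) z = ∑ j, v j * evalP P (x j)) ↔ momentMap x q v = momentMap x q w₀ :=
    fun v => by
      rw [momentMap_eq_momentMap_iff]
      exact forall₂_congr fun P hP => by rw [hw₀ P hP, eq_comm]
  obtain ⟨w, hwT, hwmin, hcard⟩ := exists_isMinOn_weightedL1_card_support_le
    (r := fun j => ‖x j - z‖ ^ μ) (fun j => by positivity) (momentMap x q) w₀
  refine ⟨w, (exact_iff w).mpr hwT, fun v hv => hwmin ((exact_iff v).mp hv), ?_⟩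
  calc #{j | w j ≠ 0} ≤ Module.finrank ℝ (Module.Dual ℝ (totalDegreeLT d q)) := hcard
    _ = Module.finrank ℝ (totalDegreeLT d q) := Subspace.dual_finrank_eq
    _ ≤ (d + q - 1).choose d := finrank_totalDegreeLT_le d q

/-- Existence of sparse minimal formulas. If some formula of polynomial
exactness order q exists on X = {x₁,…,x_N}, then for any μ ≥ 0 there is a
‖·‖_{1,μ}-minimal formula of order q whose weight vector has at most
dim Π_q^d = binom(d+q-1,d) nonzero components. -/
theorem sparse_minimal_formula (d k q N : ℕ)
    (c : (Fin d → ℕ) → EuclideanSpace ℝ (Fin d) → ℝ)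
    (z : EuclideanSpace ℝ (Fin d)) (x : Fin N → EuclideanSpace ℝ (Fin d))
    (hex : ∃ w : Fin N → ℝ, ∀ P : MvPolynomial (Fin d) ℝ, P.totalDegree < q →
      Dapply k c (evalP P) z = ∑ j, w j * evalP P (x j))
    (μ : ℝ) (hμ : 0 ≤ μ) :
    ∃ w : Fin N → ℝ,
      (∀ P : MvPolynomial (Fin d) ℝ, P.totalDegree < q →
        Dapply k c (evalP P) z = ∑ j, w j * evalP P (x j)) ∧
      (∀ v : Fin N → ℝ,
        (∀ P : MvPolynomial (Fin d) ℝ, P.totalDegree < q →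
          Dapply k c (evalP P) z = ∑ j, v j * evalP P (x j)) →
        ∑ j, |w j| * ‖x j - z‖ ^ μ ≤ ∑ j, |v j| * ‖x j - z‖ ^ μ) ∧
      (Finset.univ.filter (fun j => w j ≠ 0)).card ≤ (d + q - 1).choose d :=
  sparse_minimal_formula_general d k q N c z x hex μ
end

section
/- Every positive formula for a second-order elliptic operator D that is exact of order q ∈ {3,4} is ‖·‖_{1,2}-minimal, with ‖w‖_{1,2} = ρ_{q,D}(z,X,1,2) = τ_D(z) := 2∑_{|α|=1} c_{2α}(z). -/
/-!
Exactness of order `q > 2` can be tested on the quadratic `p y = ‖y - z‖²`. Its derivatives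
`∂^α p (z)` vanish except for `α = 2eᵢ`, where they equal `2`; so for an operator of order at
least two `D p (z) = τ_D(z)`, and every exact weight vector `v` has `∑ⱼ vⱼ ‖xⱼ - z‖² = τ_D(z)`.
Hence `τ_D(z) ≤ ∑ⱼ |vⱼ| ‖xⱼ - z‖²`, with equality for a positive formula: its only negative
weight sits at `x₀ = z`, where `‖x₀ - z‖ = 0`.

The derivatives of `p` are computed on the polynomial side, where `∂^α` is linear and acts on a
polynomial in the single variable `yᵢ` through the one-variable derivative.
-/

open scoped BigOperators

open MvPolynomial

theorem hasLineDerivAt_evalP {d : ℕ} (P : MvPolynomial (Fin d) ℝ) (i : Fin d)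
    (y : EuclideanSpace ℝ (Fin d)) :
    HasLineDerivAt ℝ (evalP P) (evalP (pderiv i P) y) y (EuclideanSpace.single i 1) := by
  unfold HasLineDerivAt
  induction P using MvPolynomial.induction_on with
  | C a => simpa [evalP] using hasDerivAt_const (0 : ℝ) a
  | add p q hp hq => simpa [evalP] using hp.fun_add hq
  | mul_X p j hp =>
    have hX : HasDerivAt (fun t : ℝ => (y + t • EuclideanSpace.single i (1 : ℝ)) j)
        (EuclideanSpace.single i (1 : ℝ) j) 0 := by
      simpa using ((hasDerivAt_id (0 : ℝ)).smul_const
        (EuclideanSpace.single i (1 : ℝ) j)).const_add (y j)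
    simpa [evalP, pderiv_X, Pi.single_apply, PiLp.single_apply, eq_comm, add_comm, mul_comm,
      apply_ite, ite_add] using hp.fun_mul hX

theorem pd_evalP {d : ℕ} (i : Fin d) (P : MvPolynomial (Fin d) ℝ) :
    pd i (evalP P) = evalP (pderiv i P) :=
  funext fun y => (hasLineDerivAt_evalP P i y).lineDeriv

theorem Polynomial.eval_iterate_derivative_X_sub_C_sq {R : Type*} [CommRing R] (a : R) (n : ℕ) :
    (Polynomial.derivative^[n] ((Polynomial.X - Polynomial.C a) ^ 2)).eval a =
      if n = 2 then 2 else 0 := by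
  rw [Polynomial.iterate_derivative_X_sub_pow]
  rcases n with _ | _ | _ | n <;> simp [Nat.descFactorial]

namespace MvPolynomial

variable {R : Type*} [CommSemiring R]

theorem eval_aeval_X {σ : Type*} (f : σ → R) (i : σ) (p : Polynomial R) :
    eval f (Polynomial.aeval (X i : MvPolynomial σ R) p) = p.eval (f i) := by
  induction p using Polynomial.induction_on <;> simp_all

section OneVariable

variable {σ : Type*} [DecidableEq σ]

theorem pderiv_pow_aeval_X (k i : σ) (n : ℕ) (q : Polynomial R) :
    ((pderiv (R := R) k : Module.End R (MvPolynomial σ R)) ^ n) (Polynomial.aeval (X i) q) =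
      if n = 0 ∨ k = i then Polynomial.aeval (X i) (Polynomial.derivative^[n] q) else 0 := by
  induction n with
  | zero => simp
  | succ n ih =>
    rw [pow_succ', Module.End.mul_apply, ih]
    by_cases hki : k = i
    · subst hki
      simp [Function.iterate_succ_apply']
    · have hX : pderiv k (X i : MvPolynomial σ R) = 0 := pderiv_X_of_ne (Ne.symm hki)
      split_ifs <;> simp_all

theorem list_prod_pderiv_pow_aeval_X (α : σ → ℕ) (i : σ) (q : Polynomial R) (l : List σ) :
    (l.map fun k => (pderiv (R := R) k : Module.End R (MvPolynomial σ R)) ^ α k).prod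
        (Polynomial.aeval (X i) q) =
      if ∀ k ∈ l, k ≠ i → α k = 0 then
        Polynomial.aeval (X i) (Polynomial.derivative^[l.count i * α i] q) else 0 := by
  induction l with
  | nil => simp
  | cons k l ih =>
    rw [List.map_cons, List.prod_cons, Module.End.mul_apply, ih]
    by_cases hl : ∀ k ∈ l, k ≠ i → α k = 0
    · have hcons : (∀ k' ∈ k :: l, k' ≠ i → α k' = 0) ↔ (α k = 0 ∨ k = i) := by
        rw [List.forall_mem_cons]
        tauto
      rw [if_pos hl, pderiv_pow_aeval_X]
      by_cases hk : α k = 0 ∨ k = i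
      · rw [if_pos hk, if_pos (hcons.2 hk), ← Function.iterate_add_apply]
        by_cases hki : k = i
        · subst hki
          simp [add_mul, add_comm]
        · simp [hk.resolve_right hki, hki]
      · rw [if_neg hk, if_neg (mt hcons.1 hk)]
    · have : ¬ ∀ k' ∈ k :: l, k' ≠ i → α k' = 0 :=
        fun h => hl fun k' hk' => h k' (List.mem_cons_of_mem _ hk')
      rw [if_neg hl, if_neg this, map_zero]

end OneVariable

variable {d : ℕ}

noncomputable def pderivMulti (α : Fin d → ℕ) : Module.End R (MvPolynomial (Fin d) R) :=
  (List.ofFn fun i => (pderiv (R := R) i : Module.End R (MvPolynomial (Fin d) R)) ^ α i).prod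

theorem pderivMulti_aeval_X (α : Fin d → ℕ) (i : Fin d) (q : Polynomial R) :
    pderivMulti α (Polynomial.aeval (X i : MvPolynomial (Fin d) R) q) =
      if ∀ k ≠ i, α k = 0 then Polynomial.aeval (X i) (Polynomial.derivative^[α i] q) else 0 := by
  simp [pderivMulti, List.ofFn_eq_map, list_prod_pderiv_pow_aeval_X, List.count_finRange]

end MvPolynomial

theorem pdMulti_evalP {d : ℕ} (α : Fin d → ℕ) (P : MvPolynomial (Fin d) ℝ) :
    pdMulti α (evalP P) = evalP (pderivMulti α P) := by
  unfold pdMulti pderivMulti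
  rw [List.ofFn_eq_map, List.ofFn_eq_map]
  induction List.finRange d with
  | nil => rfl
  | cons k l ih =>
    simp only [List.map_cons, List.foldr_cons, List.prod_cons, Function.comp_apply,
      Module.End.mul_apply, ih, Module.End.pow_apply]
    exact (Function.Semiconj.iterate_right (fun P => (pd_evalP k P).symm) (α k) _).symm

noncomputable def sqDistPoly {d : ℕ} (z : EuclideanSpace ℝ (Fin d)) : MvPolynomial (Fin d) ℝ :=
  ∑ i, (X i - C (z i)) ^ 2

section sqDistPoly

variable {d : ℕ} (z : EuclideanSpace ℝ (Fin d))

theorem evalP_sqDistPoly (y : EuclideanSpace ℝ (Fin d)) :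
    evalP (sqDistPoly z) y = ‖y - z‖ ^ 2 := by
  simp [evalP, sqDistPoly, EuclideanSpace.norm_sq_eq]

theorem totalDegree_sqDistPoly_le : (sqDistPoly z).totalDegree ≤ 2 := by
  refine totalDegree_finsetSum_le fun i _ => (totalDegree_pow _ 2).trans ?_
  have : (X i - C (z i) : MvPolynomial (Fin d) ℝ).totalDegree ≤ 1 :=
    (totalDegree_sub_C_le _ _).trans (totalDegree_X i).le
  omega

theorem evalP_pderivMulti_sqDistPoly (α : Fin d → ℕ) :
    evalP (pderivMulti α (sqDistPoly z)) z = ∑ i, if α = Pi.single i 2 then 2 else 0 := by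
  simp only [sqDistPoly, map_sum, evalP]
  refine Finset.sum_congr rfl fun i _ => ?_
  have hsq : (X i - C (z i)) ^ 2 = Polynomial.aeval (X i : MvPolynomial (Fin d) ℝ)
      ((Polynomial.X - Polynomial.C (z i)) ^ 2) := by
    simp
  rw [hsq, pderivMulti_aeval_X]
  have hα : α = Pi.single i 2 ↔ (∀ k ≠ i, α k = 0) ∧ α i = 2 := by
    refine ⟨by rintro rfl; simp +contextual, fun ⟨h0, h2⟩ => ?_⟩
    funext k
    by_cases hk : k = i
    · simp [hk, h2]
    · simp [hk, h0 k hk]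
  by_cases h0 : ∀ k ≠ i, α k = 0
  · rw [if_pos h0, eval_aeval_X, Polynomial.eval_iterate_derivative_X_sub_C_sq]
    simp only [hα, and_iff_right h0]
  · rw [if_neg h0, if_neg fun h => h0 (hα.1 h).1, map_zero]

end sqDistPoly

theorem Dapply_evalP_sqDistPoly {d k : ℕ} (hk : 2 ≤ k)
    (c : (Fin d → ℕ) → EuclideanSpace ℝ (Fin d) → ℝ) (z : EuclideanSpace ℝ (Fin d)) :
    Dapply k c (evalP (sqDistPoly z)) z = 2 * ∑ i, c (Pi.single i 2) z := by
  have hmem (i : Fin d) (s : ℕ) :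
      Pi.single i 2 ∈ Finset.Nat.antidiagonalTuple d s ↔ s = 2 := by
    simp [Finset.Nat.mem_antidiagonalTuple, eq_comm]
  simp_rw [Dapply, pdMulti_evalP, evalP_pderivMulti_sqDistPoly, Finset.mul_sum, mul_ite, mul_zero]
  calc _ = ∑ s ∈ Finset.range (k + 1), ∑ i,
          if Pi.single i 2 ∈ Finset.Nat.antidiagonalTuple d s then c (Pi.single i 2) z * 2
          else 0 := by
        refine Finset.sum_congr rfl fun s _ => ?_
        rw [Finset.sum_comm]
        simp_rw [Finset.sum_ite_eq']
    _ = _ := by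
        rw [Finset.sum_comm]
        simp_rw [hmem, Finset.sum_ite_eq', Finset.mem_range, if_pos (Nat.lt_succ_of_le hk),
          mul_comm]

def IsExactOfOrder {d : ℕ} {ι : Type*} [Fintype ι] (k q : ℕ)
    (c : (Fin d → ℕ) → EuclideanSpace ℝ (Fin d) → ℝ) (z : EuclideanSpace ℝ (Fin d))
    (x : ι → EuclideanSpace ℝ (Fin d)) (w : ι → ℝ) : Prop :=
  ∀ P : MvPolynomial (Fin d) ℝ, P.totalDegree < q →
    Dapply k c (evalP P) z = ∑ j, w j * evalP P (x j)

namespace IsExactOfOrder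

variable {d k q : ℕ} {ι : Type*} [Fintype ι] {c : (Fin d → ℕ) → EuclideanSpace ℝ (Fin d) → ℝ}
  {z : EuclideanSpace ℝ (Fin d)} {x : ι → EuclideanSpace ℝ (Fin d)} {w : ι → ℝ}

theorem sum_mul_norm_sub_sq (h : IsExactOfOrder k q c z x w) (hk : 2 ≤ k) (hq : 2 < q) :
    ∑ j, w j * ‖x j - z‖ ^ 2 = 2 * ∑ i, c (Pi.single i 2) z := by
  have := h (sqDistPoly z) ((totalDegree_sqDistPoly_le z).trans_lt hq)
  simp only [Dapply_evalP_sqDistPoly hk, evalP_sqDistPoly] at this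
  exact this.symm

theorem le_sum_abs_mul_norm_sub_sq (h : IsExactOfOrder k q c z x w) (hk : 2 ≤ k) (hq : 2 < q) :
    2 * ∑ i, c (Pi.single i 2) z ≤ ∑ j, |w j| * ‖x j - z‖ ^ 2 :=
  h.sum_mul_norm_sub_sq hk hq ▸ Finset.sum_le_sum fun _ _ =>
    mul_le_mul_of_nonneg_right (le_abs_self _) (sq_nonneg _)

end IsExactOfOrder

theorem positive_formula_minimal_general (d N q : ℕ) (hq : q = 3 ∨ q = 4)
    (c : (Fin d → ℕ) → EuclideanSpace ℝ (Fin d) → ℝ)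
    (z : EuclideanSpace ℝ (Fin d)) (x : Fin (N + 1) → EuclideanSpace ℝ (Fin d))
    (w : Fin (N + 1) → ℝ)
    (hx0 : x 0 = z) (hwj : ∀ j : Fin (N + 1), j ≠ 0 → 0 < w j)
    (hexact : ∀ P : MvPolynomial (Fin d) ℝ, P.totalDegree < q →
      Dapply 2 c (evalP P) z = ∑ j, w j * evalP P (x j)) :
    (∑ j, |w j| * ‖x j - z‖ ^ 2 =
        2 * ∑ i : Fin d, c (fun i' => if i' = i then 2 else 0) z) ∧
    (∀ v : Fin (N + 1) → ℝ,
      (∀ P : MvPolynomial (Fin d) ℝ, P.totalDegree < q →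
        Dapply 2 c (evalP P) z = ∑ j, v j * evalP P (x j)) →
      2 * ∑ i : Fin d, c (fun i' => if i' = i then 2 else 0) z ≤
        ∑ j, |v j| * ‖x j - z‖ ^ 2) := by
  have hq2 : 2 < q := by omega
  have hsingle (i : Fin d) : (fun i' => if i' = i then 2 else 0) = Pi.single i 2 :=
    funext fun i' => (Pi.single_apply i 2 i').symm
  simp only [hsingle]
  have habs : ∑ j, |w j| * ‖x j - z‖ ^ 2 = ∑ j, w j * ‖x j - z‖ ^ 2 := by
    refine Finset.sum_congr rfl fun j _ => ?_
    rcases eq_or_ne j 0 with rfl | hj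
    · simp [hx0]
    · rw [abs_of_pos (hwj j hj)]
  exact ⟨habs.trans (IsExactOfOrder.sum_mul_norm_sub_sq hexact le_rfl hq2),
    fun v hv => IsExactOfOrder.le_sum_abs_mul_norm_sub_sq hv le_rfl hq2⟩

/-- Every positive formula for a second-order elliptic operator D that is exact
of order q ∈ {3,4} is ‖·‖_{1,2}-minimal, with
‖w‖_{1,2} = ρ_{q,D}(z,X,1,2) = τ_D(z) = 2 ∑_{|α|=1} c_{2α}(z). -/
theorem positive_formula_minimal (d N q : ℕ) (hq : q = 3 ∨ q = 4)
    (c : (Fin d → ℕ) → EuclideanSpace ℝ (Fin d) → ℝ)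
    (z : EuclideanSpace ℝ (Fin d)) (x : Fin (N + 1) → EuclideanSpace ℝ (Fin d))
    (w : Fin (N + 1) → ℝ)
    (helliptic : ∀ ξ : Fin d → ℝ, ξ ≠ 0 →
      0 < ∑ α ∈ Finset.Nat.antidiagonalTuple d 2, c α z * ∏ i, ξ i ^ α i)
    (hx0 : x 0 = z) (hw0 : w 0 < 0) (hwj : ∀ j : Fin (N + 1), j ≠ 0 → 0 < w j)
    (hexact : ∀ P : MvPolynomial (Fin d) ℝ, P.totalDegree < q →
      Dapply 2 c (evalP P) z = ∑ j, w j * evalP P (x j)) :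
    (∑ j, |w j| * ‖x j - z‖ ^ 2 =
        2 * ∑ i : Fin d, c (fun i' => if i' = i then 2 else 0) z) ∧
    (∀ v : Fin (N + 1) → ℝ,
      (∀ P : MvPolynomial (Fin d) ℝ, P.totalDegree < q →
        Dapply 2 c (evalP P) z = ∑ j, v j * evalP P (x j)) →
      2 * ∑ i : Fin d, c (fun i' => if i' = i then 2 else 0) z ≤
        ∑ j, |v j| * ‖x j - z‖ ^ 2) :=
  positive_formula_minimal_general d N q hq c z x w hx0 hwj hexact
end
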